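/- arXiv:1709.02625 — 3 statements merged into one kernel-verified Lean document; each statement's English description precedes it below -/
import Mathlib

section
/- Let A and B be n×n complex Hermitian matrices, c ∈ ℂⁿ, and d ∈ ℝ. Assume the strict feasibility (Slater) condition: there exists x₀ ∈ ℂⁿ with x₀ᴴ B x₀ < 1. Then the following two conditions are equivalent: (i) for every x ∈ ℂⁿ with xᴴ B x ≤ 1 one has xᴴ A x + 2·Re(cᴴ x) + d ≥ 0; (ii) there exists λ ≥ 0 such that the (n+1)×(n+1) block Hermitian matrix [[A + λB, c], [cᴴ, d − λ]] is positive semidefinite. -/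
/-!
Homogenize: with `F = [[A, c], [cᴴ, d]]` and `G = [[B, 0], [0, -1]]`, condition (i) says that
`zᴴ F z ≥ 0` whenever `zᴴ G z ≤ 0` (rescale when the last coordinate of `z` is nonzero, pass to
the limit when it vanishes), and the matrix in (ii) is `F + λ G`.

A multiplier `λ ≥ 0` with `F + λ G ⪰ 0` has to lie between all `-F(y) / G(y)` with `G(y) > 0` and
all `F(x) / (-G(x))` with `G(x) < 0`, so it exists as soon as `F(y) G(x) ≤ F(x) G(y)` for
`G(x) ≤ 0 ≤ G(y)`. This is where complex scalars are needed: pick a phase `ω` with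
`Re (ω · xᴴ G y) = 0`; then `u = √G(y) • x` and `v = √(-G(x)) ω • y` make `u + v` and `u - v`
both `G`-isotropic, so `0 ≤ F(u + v) + F(u - v) = 2 (G(y) F(x) - G(x) F(y))`.
-/

open Matrix ComplexOrder

open Filter Topology in
lemma nonneg_of_forall_pos_nonneg_add_mul_add_mul_sq {a b c : ℝ}
    (h : ∀ ε > 0, 0 ≤ a + b * ε + c * ε ^ 2) : 0 ≤ a := by
  have hlim : Tendsto (fun ε : ℝ => a + b * ε + c * ε ^ 2) (𝓝[>] 0) (𝓝 a) := by
    have hcont : Continuous fun ε : ℝ => a + b * ε + c * ε ^ 2 := by fun_prop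
    simpa using (hcont.tendsto 0).mono_left nhdsWithin_le_nhds
  exact ge_of_tendsto hlim (eventually_nhdsWithin_of_forall h)

lemma Complex.exists_norm_eq_one_re_mul_eq_zero (g : ℂ) : ∃ ω : ℂ, ‖ω‖ = 1 ∧ (ω * g).re = 0 := by
  refine ⟨I * exp (↑(-arg g) * I), by rw [norm_mul, norm_I, norm_exp_ofReal_mul_I, one_mul], ?_⟩
  have : I * exp (↑(-arg g) * I) * g = I * ‖g‖ := by
    calc I * exp (↑(-arg g) * I) * g
        = I * exp (↑(-arg g) * I) * (‖g‖ * exp (arg g * I)) := by rw [norm_mul_exp_arg_mul_I]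
      _ = I * ‖g‖ * exp (↑(-arg g) * I + arg g * I) := by rw [exp_add]; ring
      _ = I * ‖g‖ := by simp
  rw [this]
  simp

namespace Matrix

section QuadraticForm

variable {ι : Type*} [Fintype ι]

lemma star_smul_dotProduct_mulVec_smul (C : Matrix ι ι ℂ) (a b : ℂ) (x y : ι → ℂ) :
    star (a • x) ⬝ᵥ C *ᵥ (b • y) = starRingEnd ℂ a * b * (star x ⬝ᵥ C *ᵥ y) := by
  rw [star_smul, mulVec_smul, smul_dotProduct, dotProduct_smul]
  simp only [smul_eq_mul, Complex.star_def]
  ring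

lemma re_star_smul_dotProduct_mulVec_smul (C : Matrix ι ι ℂ) (a : ℂ) (x : ι → ℂ) :
    (star (a • x) ⬝ᵥ C *ᵥ (a • x)).re = Complex.normSq a * (star x ⬝ᵥ C *ᵥ x).re := by
  rw [star_smul_dotProduct_mulVec_smul, ← Complex.normSq_eq_conj_mul_self, Complex.re_ofReal_mul]

lemma IsHermitian.star_dotProduct_mulVec_swap {C : Matrix ι ι ℂ} (hC : C.IsHermitian)
    (u v : ι → ℂ) : star v ⬝ᵥ C *ᵥ u = starRingEnd ℂ (star u ⬝ᵥ C *ᵥ v) := by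
  rw [← Complex.star_def, star_dotProduct, star_mulVec, ← dotProduct_mulVec, hC.eq]

lemma IsHermitian.re_star_add_dotProduct_mulVec_add {C : Matrix ι ι ℂ} (hC : C.IsHermitian)
    (u v : ι → ℂ) : (star (u + v) ⬝ᵥ C *ᵥ (u + v)).re =
      (star u ⬝ᵥ C *ᵥ u).re + (star v ⬝ᵥ C *ᵥ v).re + 2 * (star u ⬝ᵥ C *ᵥ v).re := by
  simp only [star_add, mulVec_add, add_dotProduct, dotProduct_add, Complex.add_re,
    hC.star_dotProduct_mulVec_swap u v, Complex.conj_re]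
  ring

lemma parallelogram_law_re_star_dotProduct_mulVec (C : Matrix ι ι ℂ) (u v : ι → ℂ) :
    (star (u + v) ⬝ᵥ C *ᵥ (u + v)).re + (star (u - v) ⬝ᵥ C *ᵥ (u - v)).re =
      2 * (star u ⬝ᵥ C *ᵥ u).re + 2 * (star v ⬝ᵥ C *ᵥ v).re := by
  simp only [star_add, star_sub, mulVec_add, mulVec_sub, add_dotProduct, dotProduct_add,
    sub_dotProduct, dotProduct_sub, Complex.add_re, Complex.sub_re]
  ring

lemma re_star_dotProduct_add_smul_mulVec (F G : Matrix ι ι ℂ) (lam : ℝ) (z : ι → ℂ) :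
    (star z ⬝ᵥ (F + (lam : ℂ) • G) *ᵥ z).re =
      (star z ⬝ᵥ F *ᵥ z).re + lam * (star z ⬝ᵥ G *ᵥ z).re := by
  rw [add_mulVec, smul_mulVec, dotProduct_add, dotProduct_smul, Complex.add_re, smul_eq_mul,
    Complex.re_ofReal_mul]

lemma IsHermitian.posSemidef_of_re_nonneg {C : Matrix ι ι ℂ} (hC : C.IsHermitian)
    (h : ∀ x, 0 ≤ (star x ⬝ᵥ C *ᵥ x).re) : C.PosSemidef :=
  .of_dotProduct_mulVec_nonneg hC fun x =>
    Complex.nonneg_iff.mpr ⟨h x, by simpa using (hC.im_star_dotProduct_mulVec_self x).symm⟩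

theorem IsHermitian.re_mul_le_re_mul_of_isotropic_nonneg {F G : Matrix ι ι ℂ}
    (hG : G.IsHermitian) (h : ∀ z, (star z ⬝ᵥ G *ᵥ z).re = 0 → 0 ≤ (star z ⬝ᵥ F *ᵥ z).re)
    {x y : ι → ℂ} (hx : (star x ⬝ᵥ G *ᵥ x).re ≤ 0) (hy : 0 ≤ (star y ⬝ᵥ G *ᵥ y).re) :
    (star y ⬝ᵥ F *ᵥ y).re * (star x ⬝ᵥ G *ᵥ x).re ≤
      (star x ⬝ᵥ F *ᵥ x).re * (star y ⬝ᵥ G *ᵥ y).re := by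
  obtain ⟨ω, hω, hωg⟩ := Complex.exists_norm_eq_one_re_mul_eq_zero (star x ⬝ᵥ G *ᵥ y)
  set a : ℂ := ((√(star y ⬝ᵥ G *ᵥ y).re : ℝ) : ℂ)
  set b : ℂ := ((√(-(star x ⬝ᵥ G *ᵥ x).re) : ℝ) : ℂ) * ω
  have ha : Complex.normSq a = (star y ⬝ᵥ G *ᵥ y).re := by
    simp [a, Complex.normSq_ofReal, Real.mul_self_sqrt hy]
  have hb : Complex.normSq b = -(star x ⬝ᵥ G *ᵥ x).re := by
    rw [Complex.normSq_mul, Complex.normSq_ofReal, Real.mul_self_sqrt (neg_nonneg.mpr hx),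
      Complex.normSq_eq_norm_sq, hω]
    ring
  have hcross : (star (a • x) ⬝ᵥ G *ᵥ (b • y)).re = 0 := by
    rw [star_smul_dotProduct_mulVec_smul, Complex.conj_ofReal, mul_assoc, mul_assoc,
      Complex.re_ofReal_mul, Complex.re_ofReal_mul, hωg, mul_zero, mul_zero]
  have hplus : (star (a • x + b • y) ⬝ᵥ G *ᵥ (a • x + b • y)).re = 0 := by
    rw [hG.re_star_add_dotProduct_mulVec_add, re_star_smul_dotProduct_mulVec_smul,
      re_star_smul_dotProduct_mulVec_smul, ha, hb, hcross]
    ring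
  have hminus : (star (a • x - b • y) ⬝ᵥ G *ᵥ (a • x - b • y)).re = 0 := by
    rw [sub_eq_add_neg, ← neg_smul, hG.re_star_add_dotProduct_mulVec_add,
      re_star_smul_dotProduct_mulVec_smul, re_star_smul_dotProduct_mulVec_smul, ha,
      Complex.normSq_neg, hb, neg_smul, mulVec_neg, dotProduct_neg, Complex.neg_re, hcross]
    ring
  have hsum := parallelogram_law_re_star_dotProduct_mulVec F (a • x) (b • y)
  rw [re_star_smul_dotProduct_mulVec_smul, re_star_smul_dotProduct_mulVec_smul, ha, hb] at hsum
  linarith [h _ hplus, h _ hminus]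

theorem IsHermitian.exists_posSemidef_add_smul {F G : Matrix ι ι ℂ} (hF : F.IsHermitian)
    (hG : G.IsHermitian) (hslater : ∃ x₀, (star x₀ ⬝ᵥ G *ᵥ x₀).re < 0)
    (h : ∀ z, (star z ⬝ᵥ G *ᵥ z).re ≤ 0 → 0 ≤ (star z ⬝ᵥ F *ᵥ z).re) :
    ∃ lam : ℝ, 0 ≤ lam ∧ (F + (lam : ℂ) • G).PosSemidef := by
  set f := fun z => (star z ⬝ᵥ F *ᵥ z).re
  set g := fun z => (star z ⬝ᵥ G *ᵥ z).re
  obtain ⟨x₀, hx₀⟩ := hslater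
  obtain ⟨lam, hlower, hupper⟩ := exists_between_of_forall_le
    (s := insert 0 ((fun y => -f y / g y) '' {y | 0 < g y}))
    (t := (fun x => f x / -g x) '' {x | g x < 0}) (Set.insert_nonempty _ _) ⟨_, x₀, hx₀, rfl⟩ <| by
      rintro _ (rfl | ⟨y, hy, rfl⟩) _ ⟨x, hx, rfl⟩
      · exact div_nonneg (h x hx.le) (neg_nonneg.mpr hx.le)
      · rw [div_le_div_iff₀ hy (neg_pos.mpr hx)]
        linarith [hG.re_mul_le_re_mul_of_isotropic_nonneg (fun z hz => h z hz.le) hx.le hy.le]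
  refine ⟨lam, hlower (Set.mem_insert _ _),
    (hF.add (hG.smul (Complex.conj_ofReal lam))).posSemidef_of_re_nonneg fun z => ?_⟩
  rw [re_star_dotProduct_add_smul_mulVec]
  change 0 ≤ f z + lam * g z
  rcases lt_trichotomy (g z) 0 with hz | hz | hz
  · have := hupper ⟨z, hz, rfl⟩
    rw [le_div_iff₀ (neg_pos.mpr hz)] at this
    linarith
  · simpa [hz] using h z hz.le
  · have := hlower (Set.mem_insert_of_mem _ ⟨z, hz, rfl⟩)
    rw [div_le_iff₀ hz] at this
    linarith

end QuadraticForm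

section Homogenization

variable {ι : Type*}

def homogenization (M : Matrix ι ι ℂ) (c : ι → ℂ) (δ : ℝ) : Matrix (ι ⊕ Unit) (ι ⊕ Unit) ℂ :=
  fromBlocks M (of fun i _ => c i) (of fun _ j => star (c j)) (of fun _ _ => (δ : ℂ))

lemma IsHermitian.homogenization {M : Matrix ι ι ℂ} (hM : M.IsHermitian) (c : ι → ℂ) (δ : ℝ) :
    (homogenization M c δ).IsHermitian :=
  hM.fromBlocks (by ext; simp) (by ext; simp)

lemma homogenization_add_smul (A B : Matrix ι ι ℂ) (c : ι → ℂ) (d lam : ℝ) :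
    homogenization A c d + (lam : ℂ) • homogenization B 0 (-1) =
      homogenization (A + (lam : ℂ) • B) c (d - lam) := by
  simp only [homogenization, fromBlocks_smul, fromBlocks_add]
  congr 1 <;> ext <;> simp [sub_eq_add_neg]

variable [Fintype ι]

lemma star_dotProduct_homogenization_mulVec (M : Matrix ι ι ℂ) (c : ι → ℂ) (δ : ℝ)
    (z : ι ⊕ Unit → ℂ) :
    star z ⬝ᵥ homogenization M c δ *ᵥ z =
      star (z ∘ Sum.inl) ⬝ᵥ M *ᵥ (z ∘ Sum.inl) + star (z (.inr ())) * (star c ⬝ᵥ z ∘ Sum.inl) +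
        (star (z ∘ Sum.inl) ⬝ᵥ c) * z (.inr ()) + star (z (.inr ())) * δ * z (.inr ()) := by
  simp [homogenization, dotProduct, mulVec, Fintype.sum_sum_type, Finset.mul_sum, Finset.sum_mul,
    Finset.sum_add_distrib, mul_add, mul_assoc]
  ring

lemma re_star_dotProduct_homogenization_mulVec (M : Matrix ι ι ℂ) (c : ι → ℂ) (δ : ℝ)
    (z : ι ⊕ Unit → ℂ) :
    (star z ⬝ᵥ homogenization M c δ *ᵥ z).re =
      (star (z ∘ Sum.inl) ⬝ᵥ M *ᵥ (z ∘ Sum.inl)).re +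
        2 * (starRingEnd ℂ (z (.inr ())) * (star c ⬝ᵥ z ∘ Sum.inl)).re +
        δ * Complex.normSq (z (.inr ())) := by
  rw [star_dotProduct_homogenization_mulVec, star_dotProduct (v := z ∘ Sum.inl) (w := c)]
  simp [Complex.normSq_apply]
  ring

variable {A B : Matrix ι ι ℂ} {c : ι → ℂ} {d : ℝ}

lemma homogenized_nonneg_of_ne_zero
    (h : ∀ x : ι → ℂ, (star x ⬝ᵥ B *ᵥ x).re ≤ 1 →
      0 ≤ (star x ⬝ᵥ A *ᵥ x).re + 2 * (star c ⬝ᵥ x).re + d)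
    {x : ι → ℂ} {τ : ℂ} (hτ : τ ≠ 0) (hx : (star x ⬝ᵥ B *ᵥ x).re ≤ Complex.normSq τ) :
    0 ≤ (star x ⬝ᵥ A *ᵥ x).re + 2 * (starRingEnd ℂ τ * (star c ⬝ᵥ x)).re +
      d * Complex.normSq τ := by
  have hN : 0 < Complex.normSq τ := Complex.normSq_pos.mpr hτ
  have hscaled := h (τ⁻¹ • x) <| by
    rw [re_star_smul_dotProduct_mulVec_smul, Complex.normSq_inv]
    exact inv_mul_le_one_of_le₀ hx hN.le
  rw [re_star_smul_dotProduct_mulVec_smul, dotProduct_smul, smul_eq_mul, Complex.normSq_inv,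
    Complex.inv_def, mul_right_comm, Complex.re_mul_ofReal] at hscaled
  have key : (star x ⬝ᵥ A *ᵥ x).re + 2 * (starRingEnd ℂ τ * (star c ⬝ᵥ x)).re +
      d * Complex.normSq τ = Complex.normSq τ * ((Complex.normSq τ)⁻¹ * (star x ⬝ᵥ A *ᵥ x).re +
        2 * ((starRingEnd ℂ τ * (star c ⬝ᵥ x)).re * (Complex.normSq τ)⁻¹) + d) := by
    field_simp
  rw [key]
  exact mul_nonneg hN.le hscaled

lemma homogenized_nonneg
    (h : ∀ x : ι → ℂ, (star x ⬝ᵥ B *ᵥ x).re ≤ 1 →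
      0 ≤ (star x ⬝ᵥ A *ᵥ x).re + 2 * (star c ⬝ᵥ x).re + d)
    {z : ι ⊕ Unit → ℂ} (hz : (star z ⬝ᵥ homogenization B 0 (-1) *ᵥ z).re ≤ 0) :
    0 ≤ (star z ⬝ᵥ homogenization A c d *ᵥ z).re := by
  rw [re_star_dotProduct_homogenization_mulVec] at hz ⊢
  generalize z ∘ Sum.inl = x, z (.inr ()) = τ at hz ⊢
  have hx : (star x ⬝ᵥ B *ᵥ x).re ≤ Complex.normSq τ := by
    simp only [star_zero, zero_dotProduct, mul_zero, Complex.zero_re] at hz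
    linarith
  rcases eq_or_ne τ 0 with rfl | hτ
  · simp only [map_zero, zero_mul, Complex.zero_re, mul_zero, add_zero]
    refine nonneg_of_forall_pos_nonneg_add_mul_add_mul_sq (b := 2 * (star c ⬝ᵥ x).re) (c := d)
      fun ε hε => ?_
    have hε' : (ε : ℂ) ≠ 0 := Complex.ofReal_ne_zero.mpr hε.ne'
    have := homogenized_nonneg_of_ne_zero h hε' (by simp at hx ⊢; nlinarith)
    rw [Complex.conj_ofReal, Complex.re_ofReal_mul, Complex.normSq_ofReal] at this
    linarith
  · exact homogenized_nonneg_of_ne_zero h hτ hx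

end Homogenization

end Matrix

/-- The complex S-lemma (S-procedure) with one quadratic constraint. -/
theorem complex_S_lemma {n : ℕ} (A B : Matrix (Fin n) (Fin n) ℂ)
    (hA : A.IsHermitian) (hB : B.IsHermitian)
    (c : Fin n → ℂ) (d : ℝ)
    (hSlater : ∃ x₀ : Fin n → ℂ, (star x₀ ⬝ᵥ B *ᵥ x₀).re < 1) :
    (∀ x : Fin n → ℂ, (star x ⬝ᵥ B *ᵥ x).re ≤ 1 →
        0 ≤ (star x ⬝ᵥ A *ᵥ x).re + 2 * (star c ⬝ᵥ x).re + d) ↔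
      (∃ lam : ℝ, 0 ≤ lam ∧
        (Matrix.fromBlocks (A + (lam : ℂ) • B)
            (Matrix.of fun i (_ : Unit) => c i)
            (Matrix.of fun (_ : Unit) j => star (c j))
            (Matrix.of fun (_ : Unit) (_ : Unit) => ((d - lam : ℝ) : ℂ))).PosSemidef) := by
  have hslater : ∃ z₀, (star z₀ ⬝ᵥ homogenization B 0 (-1) *ᵥ z₀).re < 0 := by
    obtain ⟨x₀, hx₀⟩ := hSlater
    exact ⟨Sum.elim x₀ fun _ => 1, by simpa [re_star_dotProduct_homogenization_mulVec] using hx₀⟩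
  constructor
  · intro h
    obtain ⟨lam, hlam, hpsd⟩ := (hA.homogenization c d).exists_posSemidef_add_smul
      (hB.homogenization 0 (-1)) hslater fun z hz => homogenized_nonneg h hz
    exact ⟨lam, hlam, by rwa [homogenization_add_smul] at hpsd⟩
  · rintro ⟨lam, hlam, hpsd⟩ x hx
    have hpsd' : (homogenization A c d + (lam : ℂ) • homogenization B 0 (-1)).PosSemidef := by
      rwa [homogenization_add_smul]
    have := hpsd'.re_dotProduct_nonneg (Sum.elim x fun _ => 1)
    rw [RCLike.re_to_complex, re_star_dotProduct_add_smul_mulVec,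
      re_star_dotProduct_homogenization_mulVec, re_star_dotProduct_homogenization_mulVec] at this
    simp at this
    nlinarith
end

section
/- Fix i and let ĥ_{i,j} ∈ ℂᴺ (j = 1,…,K) be estimated channels, B_{i,j} be N×N Hermitian positive definite matrices, W_1, …, W_K be N×N Hermitian positive semidefinite matrices, and let σ² > 0, δ > 0, γ > 0, ρ ∈ (0,1]. Then the worst-case constraint '(ĥ_{i,i}+e_{i,i})ᴴ W_i (ĥ_{i,i}+e_{i,i})/γ − Σ_{j≠i} (ĥ_{i,j}+e_{i,j})ᴴ W_j (ĥ_{i,j}+e_{i,j}) − σ² ≥ δ²/ρ for all (e_{i,1},…,e_{i,K}) with e_{i,j}ᴴ B_{i,j} e_{i,j} ≤ 1 for every j' holds if and only if there exist real numbers t̄_{i,j} ≥ 0 (j ≠ i) such that: (a) for every e_{i,i} with e_{i,i}ᴴ B_{i,i} e_{i,i} ≤ 1, the 2×2 real symmetric matrix [[ρ, δ], [δ, (ĥ_{i,i}+e_{i,i})ᴴ W_i (ĥ_{i,i}+e_{i,i})/γ − Σ_{j≠i} t̄_{i,j} − σ²]] is positive semidefinite, and (b) for every j ≠ i and every e_{i,j}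 with e_{i,j}ᴴ B_{i,j} e_{i,j} ≤ 1, (ĥ_{i,j}+e_{i,j})ᴴ W_j (ĥ_{i,j}+e_{i,j}) ≤ t̄_{i,j}. -/
/-!
The error vectors are independent and the interference terms enter separably, so the worst
case of their sum is the sum of the individual worst cases: the slack `tb j` is the supremum of
`(ĥ_j + e)ᴴ W_j (ĥ_j + e)` over the ellipsoid of `B j` (finite because the constraint bounds it,
nonnegative because `W j ⪰ 0`). What remains is a scalar inequality `δ² / ρ ≤ c`, the Schur
complement form of the 2×2 condition.
-/

open Matrix ComplexOrder Function

theorem exists_bounds_of_forall_sum_le {ι X : Type*} [DecidableEq ι] {A : ι → Set X}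
    (hA : ∀ j, (A j).Nonempty) (f : ι → X → ℝ) (g : X → ℝ) {i : ι} {s : Finset ι}
    (hi : i ∉ s) (H : ∀ e : ι → X, (∀ j, e j ∈ A j) → ∑ j ∈ s, f j (e j) ≤ g (e i)) :
    ∃ t : ι → ℝ, (∀ x ∈ A i, ∑ j ∈ s, t j ≤ g x) ∧ ∀ j ∈ s, ∀ x ∈ A j, f j x ≤ t j := by
  obtain ⟨e₀, he₀⟩ : ∃ e : ι → X, ∀ j, e j ∈ A j :=
    ⟨fun j => (hA j).some, fun j => (hA j).some_mem⟩
  have update_mem : ∀ e : ι → X, (∀ j, e j ∈ A j) →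
      ∀ a, ∀ x ∈ A a, ∀ j, update e a x j ∈ A j :=
    fun e he a x hx => (forall_update_iff e fun j y => y ∈ A j).2 ⟨hx, fun j _ => he j⟩
  induction s using Finset.induction_on generalizing g with
  | empty =>
    refine ⟨0, fun x hx => ?_, by simp⟩
    simpa using H _ (update_mem e₀ he₀ i x hx)
  | insert a s ha ih =>
    -- The bound for the new index `a` is the supremum of `f a` over `A a`, finite by `H`.
    have hai : a ≠ i := fun h => hi (h ▸ Finset.mem_insert_self a s)
    have hi' : i ∉ s := fun h => hi (Finset.mem_insert_of_mem h)
    have sum_update : ∀ (e : ι → X) x,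
        ∑ j ∈ s, f j (update e a x j) = ∑ j ∈ s, f j (e j) := fun e x =>
      Finset.sum_congr rfl fun j hj => by rw [update_of_ne (ne_of_mem_of_not_mem hj ha)]
    have H_a : ∀ e : ι → X, (∀ j, e j ∈ A j) →
        ∀ x ∈ A a, f a x ≤ g (e i) - ∑ j ∈ s, f j (e j) := by
      intro e he x hx
      have := H _ (update_mem e he a x hx)
      rw [Finset.sum_insert ha, sum_update, update_self, update_of_ne hai.symm] at this
      linarith
    set T := sSup (f a '' A a)
    have hT : ∀ x ∈ A a, f a x ≤ T := fun x hx =>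
      le_csSup ⟨_, Set.forall_mem_image.2 (H_a e₀ he₀)⟩ (Set.mem_image_of_mem _ hx)
    obtain ⟨t, ht_sum, ht_bound⟩ := ih (fun x => g x - T) hi' fun e he => by
      have : T ≤ g (e i) - ∑ j ∈ s, f j (e j) :=
        csSup_le ((hA a).image _) (Set.forall_mem_image.2 (H_a e he))
      linarith
    refine ⟨update t a T, fun x hx => ?_, fun j hj x hx => ?_⟩
    · rw [Finset.sum_insert ha, update_self, Finset.sum_update_of_notMem ha]
      linarith [ht_sum x hx]
    · rcases Finset.mem_insert.1 hj with rfl | hj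
      · simpa using hT x hx
      · rw [update_of_ne (ne_of_mem_of_not_mem hj ha)]
        exact ht_bound j hj x hx

theorem forall_sum_le_iff_exists_bounds {ι X : Type*} [DecidableEq ι] {A : ι → Set X}
    (hA : ∀ j, (A j).Nonempty) (f : ι → X → ℝ) (g : X → ℝ) {i : ι} {s : Finset ι} (hi : i ∉ s) :
    (∀ e : ι → X, (∀ j, e j ∈ A j) → ∑ j ∈ s, f j (e j) ≤ g (e i)) ↔
      ∃ t : ι → ℝ, (∀ x ∈ A i, ∑ j ∈ s, t j ≤ g x) ∧ ∀ j ∈ s, ∀ x ∈ A j, f j x ≤ t j :=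
  ⟨exists_bounds_of_forall_sum_le hA f g hi, fun ⟨_, ht_sum, ht_bound⟩ e he =>
    (Finset.sum_le_sum fun j hj => ht_bound j hj (e j) (he j)).trans (ht_sum (e i) (he i))⟩

theorem posSemidef_fin_two_iff_sq_div_le {a b c : ℝ} (ha : 0 < a) :
    (!![a, b; b, c] : Matrix (Fin 2) (Fin 2) ℝ).PosSemidef ↔ b ^ 2 / a ≤ c := by
  have quad : ∀ x : Fin 2 → ℝ,
      star x ⬝ᵥ !![a, b; b, c] *ᵥ x = a * x 0 ^ 2 + 2 * b * x 0 * x 1 + c * x 1 ^ 2 := by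
    intro x
    simp only [dotProduct, mulVec, Fin.sum_univ_two, Pi.star_apply, star_trivial, of_apply,
      cons_val', cons_val_zero, cons_val_one, cons_val_fin_one]
    ring
  rw [div_le_iff₀ ha]
  constructor
  · intro h
    have := h.dotProduct_mulVec_nonneg ![-b, a]
    rw [quad] at this
    simp only [cons_val_zero, cons_val_one, cons_val_fin_one] at this
    nlinarith
  · intro h
    refine Matrix.PosSemidef.of_dotProduct_mulVec_nonneg ?_ fun x => ?_
    · ext p q
      fin_cases p <;> fin_cases q <;> simp
    · rw [quad]
      nlinarith [sq_nonneg (a * x 0 + b * x 1), sq_nonneg (x 1)]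

theorem worst_case_sinr_slack_iff_general {N K : ℕ} (i : Fin K)
    (hh : Fin K → (Fin N → ℂ))
    (B : Fin K → Matrix (Fin N) (Fin N) ℂ)
    (W : Fin K → Matrix (Fin N) (Fin N) ℂ) (hW : ∀ j, (W j).PosSemidef)
    (σ2 δ γ ρ : ℝ)
    (hρ0 : 0 < ρ) :
    (∀ e : Fin K → (Fin N → ℂ), (∀ j, (star (e j) ⬝ᵥ (B j) *ᵥ (e j)).re ≤ 1) →
        (star (hh i + e i) ⬝ᵥ (W i) *ᵥ (hh i + e i)).re / γ -
            (∑ j ∈ Finset.univ.erase i,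
              (star (hh j + e j) ⬝ᵥ (W j) *ᵥ (hh j + e j)).re) - σ2 ≥ δ ^ 2 / ρ) ↔
      (∃ tb : Fin K → ℝ, (∀ j ∈ Finset.univ.erase i, 0 ≤ tb j) ∧
        (∀ e : Fin N → ℂ, (star e ⬝ᵥ (B i) *ᵥ e).re ≤ 1 →
          (!![ρ, δ; δ,
              (star (hh i + e) ⬝ᵥ (W i) *ᵥ (hh i + e)).re / γ -
                (∑ j ∈ Finset.univ.erase i, tb j) - σ2] :
            Matrix (Fin 2) (Fin 2) ℝ).PosSemidef) ∧
        (∀ j ∈ Finset.univ.erase i, ∀ e : Fin N → ℂ,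
          (star e ⬝ᵥ (B j) *ᵥ e).re ≤ 1 →
          (star (hh j + e) ⬝ᵥ (W j) *ᵥ (hh j + e)).re ≤ tb j)) := by
  have key := forall_sum_le_iff_exists_bounds
    (A := fun j => {v : Fin N → ℂ | (star v ⬝ᵥ B j *ᵥ v).re ≤ 1}) (fun j => ⟨0, by simp⟩)
    (fun j v => (star (hh j + v) ⬝ᵥ W j *ᵥ (hh j + v)).re)
    (fun v => (star (hh i + v) ⬝ᵥ W i *ᵥ (hh i + v)).re / γ - σ2 - δ ^ 2 / ρ)
    (Finset.notMem_erase i Finset.univ)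
  simp only [posSemidef_fin_two_iff_sq_div_le hρ0]
  constructor
  · intro H
    obtain ⟨t, ht_sum, ht_bound⟩ := key.1 fun e he => by linarith [H e he]
    exact ⟨t, fun j hj => ((hW j).re_dotProduct_nonneg _).trans (ht_bound j hj 0 (by simp)),
      fun x hx => by linarith [ht_sum x hx], ht_bound⟩
  · rintro ⟨t, -, ht_sum, ht_bound⟩ e he
    linarith [key.2 ⟨t, fun x hx => by linarith [ht_sum x hx], ht_bound⟩ e he]

/-- The worst-case SINR constraint of receiver `i` over ellipsoidal channel uncertainty
is equivalent to a per-error 2×2 PSD condition together with worst-case interference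
bounds encoded by slack variables `tb_{i,j}`. -/
theorem worst_case_sinr_slack_iff {N K : ℕ} (i : Fin K)
    (hh : Fin K → (Fin N → ℂ))
    (B : Fin K → Matrix (Fin N) (Fin N) ℂ) (hB : ∀ j, (B j).PosDef)
    (W : Fin K → Matrix (Fin N) (Fin N) ℂ) (hW : ∀ j, (W j).PosSemidef)
    (σ2 δ γ ρ : ℝ) (hσ2 : 0 < σ2) (hδ : 0 < δ) (hγ : 0 < γ)
    (hρ0 : 0 < ρ) (hρ1 : ρ ≤ 1) :
    (∀ e : Fin K → (Fin N → ℂ), (∀ j, (star (e j) ⬝ᵥ (B j) *ᵥ (e j)).re ≤ 1) →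
        (star (hh i + e i) ⬝ᵥ (W i) *ᵥ (hh i + e i)).re / γ -
            (∑ j ∈ Finset.univ.erase i,
              (star (hh j + e j) ⬝ᵥ (W j) *ᵥ (hh j + e j)).re) - σ2 ≥ δ ^ 2 / ρ) ↔
      (∃ tb : Fin K → ℝ, (∀ j ∈ Finset.univ.erase i, 0 ≤ tb j) ∧
        (∀ e : Fin N → ℂ, (star e ⬝ᵥ (B i) *ᵥ e).re ≤ 1 →
          (!![ρ, δ; δ,
              (star (hh i + e) ⬝ᵥ (W i) *ᵥ (hh i + e)).re / γ -
                (∑ j ∈ Finset.univ.erase i, tb j) - σ2] :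
            Matrix (Fin 2) (Fin 2) ℝ).PosSemidef) ∧
        (∀ j ∈ Finset.univ.erase i, ∀ e : Fin N → ℂ,
          (star e ⬝ᵥ (B j) *ᵥ e).re ≤ 1 →
          (star (hh j + e) ⬝ᵥ (W j) *ᵥ (hh j + e)).re ≤ tb j)) :=
  worst_case_sinr_slack_iff_general i hh B W hW σ2 δ γ ρ hρ0
end

section
/- Let W and B be N×N Hermitian positive semidefinite complex matrices, ĥ ∈ ℂᴺ, and t ∈ ℝ. Then (ĥ+e)ᴴ W (ĥ+e) ≥ t for every e ∈ ℂᴺ with eᴴ B e ≤ 1, if and only if there exists μ ≥ 0 such that the (N+1)×(N+1) Hermitian block matrix [[W + μB, Wĥ], [ĥᴴW, ĥᴴWĥ − t − μ]] is positive semidefinite. -/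
/-!
Put `f e = (ĥ + e)ᴴ W (ĥ + e) - t` and `g e = eᴴ B e - 1`. Both are convex since `W, B ⪰ 0`,
the hypothesis says `f ≥ 0` on `{g ≤ 0}`, and `g 0 < 0`. For a single convex constraint with such
a Slater point a Lagrange multiplier exists by a one-dimensional argument: if `g x > 0 > g y`,
the point of the segment `[x, y]` where the chord of `g` vanishes lies in `{g ≤ 0}`, and
convexity of `f` there gives `-f x / g x ≤ f y / (-g y)`; so `μ`, the supremum of the left-hand
ratios (and `0`), satisfies `f + μ g ≥ 0` everywhere. That inequality is the dehomogenized LMI: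
the quadratic form of the block matrix at `(e, z)` is `|z|² (f + μ g) (e / z)` for `z ≠ 0`, and
`eᴴ (W + μ B) e` for `z = 0`.
-/

open Matrix ComplexOrder

section LagrangeMultiplier

variable {E : Type*} [AddCommGroup E] [Module ℝ E] {s : Set E} {f g : E → ℝ}

lemma ConvexOn.neg_mul_add_mul_nonneg (hf : ConvexOn ℝ s f) (hg : ConvexOn ℝ s g)
    (hfg : ∀ x ∈ s, g x ≤ 0 → 0 ≤ f x) {x y : E} (hx : x ∈ s) (hy : y ∈ s)
    (hgx : 0 < g x) (hgy : g y < 0) : 0 ≤ -g y * f x + g x * f y := by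
  have hgap : 0 < g x - g y := by linarith
  set a := -g y / (g x - g y)
  set b := g x / (g x - g y)
  have ha : 0 ≤ a := div_nonneg (by linarith) hgap.le
  have hb : 0 ≤ b := div_nonneg hgx.le hgap.le
  have hab : a + b = 1 := by
    rw [← add_div, div_eq_one_iff_eq hgap.ne']; ring
  -- `a • x + b • y` is where the chord of `g` from `x` to `y` crosses zero.
  have hz : a • x + b • y ∈ s := hf.1 hx hy ha hb hab
  have hgz : g (a • x + b • y) ≤ 0 :=
    calc g (a • x + b • y) ≤ a • g x + b • g y := hg.2 hx hy ha hb hab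
      _ = 0 := by simp only [smul_eq_mul, a, b]; field_simp; ring
  have hfz : 0 ≤ a * f x + b * f y := (hfg _ hz hgz).trans (hf.2 hx hy ha hb hab)
  have hcomb : a * f x + b * f y = (-g y * f x + g x * f y) / (g x - g y) := by
    simp only [a, b]; field_simp
  rwa [hcomb, le_div_iff₀ hgap, zero_mul] at hfz

theorem ConvexOn.exists_lagrange_multiplier (hf : ConvexOn ℝ s f) (hg : ConvexOn ℝ s g)
    {x₀ : E} (hx₀ : x₀ ∈ s) (hslater : g x₀ < 0) (hfg : ∀ x ∈ s, g x ≤ 0 → 0 ≤ f x) :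
    ∃ μ : ℝ, 0 ≤ μ ∧ ∀ x ∈ s, 0 ≤ f x + μ * g x := by
  set L : Set ℝ := insert 0 ((fun x => -f x / g x) '' {x | x ∈ s ∧ 0 < g x})
  have hL : ∀ y ∈ s, g y < 0 → ∀ r ∈ L, r ≤ f y / -g y := by
    rintro y hy hgy r (rfl | ⟨x, ⟨hx, hgx⟩, rfl⟩)
    · exact div_nonneg (hfg y hy hgy.le) (by linarith)
    · rw [div_le_div_iff₀ hgx (by linarith)]
      linarith [hf.neg_mul_add_mul_nonneg hg hfg hx hy hgx hgy]
  have hbdd : BddAbove L := ⟨_, hL x₀ hx₀ hslater⟩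
  refine ⟨sSup L, le_csSup hbdd (Set.mem_insert _ _), fun x hx => ?_⟩
  rcases lt_trichotomy (g x) 0 with hgx | hgx | hgx
  · have := csSup_le (Set.insert_nonempty _ _) (hL x hx hgx)
    rw [le_div_iff₀ (by linarith)] at this
    linarith
  · simpa [hgx] using hfg x hx hgx.le
  · have := le_csSup hbdd (Set.mem_insert_of_mem _ ⟨x, ⟨hx, hgx⟩, rfl⟩)
    rw [div_le_iff₀ hgx] at this
    linarith

end LagrangeMultiplier

namespace Matrix

variable {n 𝕜 : Type*} [Fintype n] [RCLike 𝕜] {A : Matrix n n 𝕜}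

lemma IsHermitian.coe_re_star_dotProduct_mulVec (hA : A.IsHermitian) (x : n → 𝕜) :
    (RCLike.re (star x ⬝ᵥ A *ᵥ x) : 𝕜) = star x ⬝ᵥ A *ᵥ x :=
  RCLike.ext (by simp) (by simp [hA.im_star_dotProduct_mulVec_self])

lemma IsHermitian.re_star_dotProduct_mulVec_add (hA : A.IsHermitian) (x y : n → 𝕜) :
    RCLike.re (star (x + y) ⬝ᵥ A *ᵥ (x + y)) = RCLike.re (star x ⬝ᵥ A *ᵥ x)
      + 2 * RCLike.re (star (A *ᵥ x) ⬝ᵥ y) + RCLike.re (star y ⬝ᵥ A *ᵥ y) := by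
  have hyx : star y ⬝ᵥ A *ᵥ x = star (star (A *ᵥ x) ⬝ᵥ y) := by
    rw [star_dotProduct]
  have hxy : star x ⬝ᵥ A *ᵥ y = star (A *ᵥ x) ⬝ᵥ y := by
    rw [star_mulVec, hA.eq, dotProduct_mulVec]
  simp only [star_add, mulVec_add, add_dotProduct, dotProduct_add, map_add, hxy, hyx,
    RCLike.star_def, RCLike.conj_re]
  ring

lemma star_smul_dotProduct_mulVec_smul_s6 (A : Matrix n n 𝕜) (z : 𝕜) (x : n → 𝕜) :
    star (z • x) ⬝ᵥ A *ᵥ (z • x) = ((‖z‖ ^ 2 : ℝ) : 𝕜) * (star x ⬝ᵥ A *ᵥ x) := by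
  rw [star_smul, mulVec_smul, smul_dotProduct, dotProduct_smul, smul_smul, smul_eq_mul,
    RCLike.star_def, RCLike.conj_mul]
  norm_cast

lemma PosSemidef.convexOn_re_star_dotProduct_mulVec (hA : A.PosSemidef) :
    ConvexOn ℝ Set.univ fun x : n → 𝕜 => RCLike.re (star x ⬝ᵥ A *ᵥ x) := by
  refine ⟨convex_univ, fun x _ y _ a b ha hb hab => ?_⟩
  have key : star (a • x + b • y) ⬝ᵥ A *ᵥ (a • x + b • y)
      + (a * b) • (star (x - y) ⬝ᵥ A *ᵥ (x - y))
      = (a * (a + b)) • (star x ⬝ᵥ A *ᵥ x) + (b * (a + b)) • (star y ⬝ᵥ A *ᵥ y) := by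
    simp only [star_add, star_sub, star_smul, star_trivial, mulVec_add, mulVec_sub, mulVec_smul,
      add_dotProduct, dotProduct_add, sub_dotProduct, dotProduct_sub, smul_dotProduct,
      dotProduct_smul]
    module
  have hre := congrArg RCLike.re key
  simp only [map_add, RCLike.smul_re, hab, mul_one, smul_eq_mul] at hre ⊢
  nlinarith [mul_nonneg (mul_nonneg ha hb) (hA.re_dotProduct_nonneg (x - y))]

lemma IsHermitian.nonneg_star_dotProduct_mulVec_iff (hA : A.IsHermitian) (x : n → 𝕜) :
    0 ≤ star x ⬝ᵥ A *ᵥ x ↔ 0 ≤ RCLike.re (star x ⬝ᵥ A *ᵥ x) := by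
  rw [← hA.coe_re_star_dotProduct_mulVec, RCLike.ofReal_nonneg, RCLike.ofReal_re]

lemma star_dotProduct_fromBlocks_mulVec (A : Matrix n n 𝕜) (u : n → 𝕜) (d : 𝕜)
    (e : n → 𝕜) (z : 𝕜) :
    star (Sum.elim e fun _ : Unit => z) ⬝ᵥ
        fromBlocks A (replicateCol Unit u) (replicateRow Unit (star u)) (of fun _ _ => d) *ᵥ
          Sum.elim e (fun _ : Unit => z)
      = star e ⬝ᵥ A *ᵥ e + z * (star e ⬝ᵥ u) + star z * (star u ⬝ᵥ e) + star z * z * d := by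
  have hcol : replicateCol Unit u *ᵥ (fun _ => z) = z • u := by
    ext; simp [mulVec, dotProduct, mul_comm]
  have hrow : replicateRow Unit (star u) *ᵥ e = fun _ => star u ⬝ᵥ e := rfl
  have hd : (of fun _ _ => d : Matrix Unit Unit 𝕜) *ᵥ (fun _ => z) = fun _ => d * z := by
    ext; simp [mulVec, dotProduct]
  rw [fromBlocks_mulVec, Sum.elim_comp_inl, Sum.elim_comp_inr, Function.star_sumElim,
    sumElim_dotProduct_sumElim, hcol, hrow, hd, dotProduct_add, dotProduct_smul, smul_eq_mul]
  simp only [dotProduct, Finset.univ_unique, Finset.sum_singleton, Pi.star_apply, Pi.add_apply]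
  ring

theorem posSemidef_fromBlocks_replicateCol_iff (hA : A.PosSemidef) (u : n → 𝕜) (d : ℝ) :
    (fromBlocks A (replicateCol Unit u) (replicateRow Unit (star u))
        (of fun _ _ => (d : 𝕜))).PosSemidef ↔
      ∀ e, 0 ≤ RCLike.re (star e ⬝ᵥ A *ᵥ e) + 2 * RCLike.re (star u ⬝ᵥ e) + d := by
  set M := fromBlocks A (replicateCol Unit u) (replicateRow Unit (star u)) (of fun _ _ => (d : 𝕜))
  have hM : M.IsHermitian := hA.1.fromBlocks (conjTranspose_replicateCol u)
    (by ext; simp)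
  have hvalue : ∀ e, RCLike.re (star (Sum.elim e fun _ => 1) ⬝ᵥ M *ᵥ Sum.elim e fun _ => 1)
      = RCLike.re (star e ⬝ᵥ A *ᵥ e) + 2 * RCLike.re (star u ⬝ᵥ e) + d := by
    intro e
    have : star e ⬝ᵥ u = star (star u ⬝ᵥ e) := by rw [star_dotProduct]
    rw [star_dotProduct_fromBlocks_mulVec, this]
    simp only [star_one, one_mul, map_add, RCLike.star_def, RCLike.conj_re, RCLike.ofReal_re]
    ring
  refine ⟨fun hMpos e => hvalue e ▸ hMpos.re_dotProduct_nonneg _, fun h => ?_⟩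
  refine posSemidef_iff_dotProduct_mulVec.2 ⟨hM, fun x => ?_⟩
  obtain ⟨e, z, rfl⟩ : ∃ e z, x = Sum.elim e fun _ : Unit => z :=
    ⟨x ∘ Sum.inl, x (Sum.inr ()), by ext (i | _) <;> rfl⟩
  rw [hM.nonneg_star_dotProduct_mulVec_iff]
  rcases eq_or_ne z 0 with rfl | hz
  · simpa [M, star_dotProduct_fromBlocks_mulVec] using hA.re_dotProduct_nonneg e
  · have hscale : (Sum.elim e fun _ : Unit => z) = z • Sum.elim (z⁻¹ • e) fun _ => 1 := by
      ext (i | _) <;> simp [hz]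
    rw [hscale, star_smul_dotProduct_mulVec_smul_s6, RCLike.re_ofReal_mul, hvalue]
    exact mul_nonneg (by positivity) (h _)

def worstCaseLowerBoundLMI (W B : Matrix n n 𝕜) (hh : n → 𝕜) (t μ : ℝ) :
    Matrix (n ⊕ Unit) (n ⊕ Unit) 𝕜 :=
  fromBlocks (W + (μ : 𝕜) • B) (of fun i _ => (W *ᵥ hh) i) (of fun _ j => (star hh ᵥ* W) j)
    (of fun _ _ => star hh ⬝ᵥ W *ᵥ hh - (t : 𝕜) - (μ : 𝕜))

theorem posSemidef_worstCaseLowerBoundLMI_iff {W B : Matrix n n 𝕜} (hW : W.PosSemidef)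
    (hB : B.PosSemidef) (hh : n → 𝕜) (t : ℝ) {μ : ℝ} (hμ : 0 ≤ μ) :
    (worstCaseLowerBoundLMI W B hh t μ).PosSemidef ↔
      ∀ e, 0 ≤ RCLike.re (star (hh + e) ⬝ᵥ W *ᵥ (hh + e)) - t
        + μ * (RCLike.re (star e ⬝ᵥ B *ᵥ e) - 1) := by
  have hA : (W + (μ : 𝕜) • B).PosSemidef := hW.add (hB.smul (RCLike.ofReal_nonneg.2 hμ))
  have hrow : star hh ᵥ* W = star (W *ᵥ hh) := by rw [star_mulVec, hW.1.eq]
  have hd : star hh ⬝ᵥ W *ᵥ hh - (t : 𝕜) - (μ : 𝕜)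
      = ((RCLike.re (star hh ⬝ᵥ W *ᵥ hh) - t - μ : ℝ) : 𝕜) := by
    rw [RCLike.ofReal_sub, RCLike.ofReal_sub, hW.1.coe_re_star_dotProduct_mulVec]
  unfold worstCaseLowerBoundLMI
  rw [hrow, hd]
  refine (posSemidef_fromBlocks_replicateCol_iff hA _ _).trans
    (forall_congr' fun e => iff_of_eq (congrArg (0 ≤ ·) ?_))
  rw [hW.1.re_star_dotProduct_mulVec_add]
  simp only [add_mulVec, smul_mulVec, dotProduct_add, dotProduct_smul, map_add, smul_eq_mul,
    RCLike.re_ofReal_mul]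
  ring

end Matrix

/-- LMI reformulation, via the complex S-lemma, of a worst-case quadratic lower-bound
constraint over an ellipsoidal uncertainty set. -/
theorem worst_case_lower_bound_iff_LMI {N : ℕ}
    (W B : Matrix (Fin N) (Fin N) ℂ) (hW : W.PosSemidef) (hB : B.PosSemidef)
    (hh : Fin N → ℂ) (t : ℝ) :
    (∀ e : Fin N → ℂ, (star e ⬝ᵥ B *ᵥ e).re ≤ 1 →
        t ≤ (star (hh + e) ⬝ᵥ W *ᵥ (hh + e)).re) ↔
      (∃ μ : ℝ, 0 ≤ μ ∧
        (Matrix.fromBlocks (W + (μ : ℂ) • B)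
            (Matrix.of fun i (_ : Unit) => (W *ᵥ hh) i)
            (Matrix.of fun (_ : Unit) j => (star hh ᵥ* W) j)
            (Matrix.of fun (_ : Unit) (_ : Unit) =>
              star hh ⬝ᵥ W *ᵥ hh - (t : ℂ) - (μ : ℂ))).PosSemidef) := by
  have hf : ConvexOn ℝ Set.univ fun e => (star (hh + e) ⬝ᵥ W *ᵥ (hh + e)).re - t :=
    (hW.convexOn_re_star_dotProduct_mulVec.translate_right hh).add_const (-t)
  have hg : ConvexOn ℝ Set.univ fun e => (star e ⬝ᵥ B *ᵥ e).re - 1 :=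
    hB.convexOn_re_star_dotProduct_mulVec.add_const (-1)
  constructor
  · intro h
    obtain ⟨μ, hμ, hfg⟩ := hf.exists_lagrange_multiplier hg (Set.mem_univ 0) (by simp)
      fun e _ he => sub_nonneg.2 (h e (sub_nonpos.1 he))
    exact ⟨μ, hμ, (posSemidef_worstCaseLowerBoundLMI_iff hW hB hh t hμ).2 fun e => hfg e trivial⟩
  · rintro ⟨μ, hμ, hM⟩ e he
    have hfg := (posSemidef_worstCaseLowerBoundLMI_iff hW hB hh t hμ).1 hM e
    simp only [RCLike.re_to_complex] at hfg
    linarith [mul_nonpos_of_nonneg_of_nonpos hμ (sub_nonpos.2 he)]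
end
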